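/- Let U(θ) = exp(−i θ P / 2) where P is a Hermitian involution (P² = I). Then for any Hermitian matrix H and any state vector ψ, the expectation value E(θ) = ⟨ψ| U(θ)† H U(θ) |ψ⟩ satisfies dE/dθ = (1/2)(E(θ + π/2) − E(θ − π/2)). -/

import Mathlib

/-!
Since `U(θ)` is a real combination of `cos (θ/2)` and `sin (θ/2)`, the expectation `E(θ)` is a
quadratic form in these two numbers, and the half-angle formulas turn it into
`α + cos θ • β + sin θ • γ`. For such a function both sides of the shift rule equal
`-sin θ • β + cos θ • γ`, because `cos (θ ± π/2) = ∓ sin θ` and `sin (θ ± π/2) = ± cos θ`.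
-/

open Matrix Real

theorem hasDerivAt_parameter_shift {F : Type*} [NormedAddCommGroup F] [NormedSpace ℝ F]
    {f : ℝ → F} {a b c : F} (hf : ∀ t, f t = a + cos t • b + sin t • c) (θ : ℝ) :
    HasDerivAt f ((2 : ℝ)⁻¹ • (f (θ + π / 2) - f (θ - π / 2))) θ := by
  have hderiv : HasDerivAt f (-sin θ • b + cos θ • c) θ := by
    rw [funext hf]
    exact (((hasDerivAt_cos θ).smul_const b).const_add a).add ((hasDerivAt_sin θ).smul_const c)
  convert hderiv using 1
  rw [hf, hf, cos_add_pi_div_two, sin_add_pi_div_two, cos_sub_pi_div_two, sin_sub_pi_div_two]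
  module

theorem star_smul_add_smul_mul_mul {α : Type*} [Ring α] [StarRing α] [Algebra ℝ α]
    [StarModule ℝ α] (A B H : α) (x y : ℝ) :
    star (x • A + y • B) * H * (x • A + y • B) =
      (x ^ 2) • (star A * H * A) + (y ^ 2) • (star B * H * B)
        + (x * y) • (star A * H * B + star B * H * A) := by
  simp only [star_add, star_smul, star_trivial, add_mul, mul_add, smul_mul_assoc, mul_smul_comm]
  module

theorem cos_sq_half_smul_add_sin_sq_half_smul {M : Type*} [AddCommGroup M] [Module ℝ M]
    (a b c : M) (t : ℝ) :
    cos (t / 2) ^ 2 • a + sin (t / 2) ^ 2 • b + (cos (t / 2) * sin (t / 2)) • c =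
      (2 : ℝ)⁻¹ • (a + b) + cos t • (2 : ℝ)⁻¹ • (a - b) + sin t • (2 : ℝ)⁻¹ • c := by
  have hcos : cos t = 2 * cos (t / 2) ^ 2 - 1 := by
    rw [← cos_two_mul, mul_div_cancel₀ t two_ne_zero]
  have hsin : sin t = 2 * sin (t / 2) * cos (t / 2) := by
    rw [← sin_two_mul, mul_div_cancel₀ t two_ne_zero]
  rw [hcos, hsin, sin_sq]
  module

theorem parameter_shift_rule_expectation_general
    {n : ℕ} (P H : Matrix (Fin n) (Fin n) ℂ)
    (ψ : Fin n → ℂ) :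
    let U : ℝ → Matrix (Fin n) (Fin n) ℂ := fun θ =>
      (Real.cos (θ / 2) : ℂ) • (1 : Matrix (Fin n) (Fin n) ℂ)
        - (Complex.I * (Real.sin (θ / 2) : ℂ)) • P
    let E : ℝ → ℂ := fun θ => star ψ ⬝ᵥ (((U θ)ᴴ * H * U θ).mulVec ψ)
    ∀ θ : ℝ, HasDerivAt E ((1 / 2 : ℂ) * (E (θ + π / 2) - E (θ - π / 2))) θ := by
  intro U E θ
  set Q : Matrix (Fin n) (Fin n) ℂ := -(Complex.I • P)
  have hU (t : ℝ) : U t = cos (t / 2) • 1 + sin (t / 2) • Q := by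
    simp only [U, Q]
    rw [mul_comm, mul_smul, Complex.coe_smul, Complex.coe_smul, smul_neg, sub_eq_add_neg]
  have hUHU (t : ℝ) : (U t)ᴴ * H * U t = (2 : ℝ)⁻¹ • (H + Qᴴ * H * Q)
      + cos t • (2 : ℝ)⁻¹ • (H - Qᴴ * H * Q) + sin t • (2 : ℝ)⁻¹ • (H * Q + Qᴴ * H) := by
    rw [hU, ← star_eq_conjTranspose, star_smul_add_smul_mul_mul,
      ← cos_sq_half_smul_add_sin_sq_half_smul]
    simp only [star_one, one_mul, mul_one, star_eq_conjTranspose]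
  obtain ⟨a, b, c, hE⟩ : ∃ a b c : ℂ, ∀ t, E t = a + cos t • b + sin t • c :=
    ⟨_, _, _, fun t => by
      simp only [E, hUHU, add_mulVec, smul_mulVec, dotProduct_add, dotProduct_smul]
      rfl⟩
  simpa only [Complex.real_smul, Complex.ofReal_inv, Complex.ofReal_ofNat, one_div] using
    hasDerivAt_parameter_shift hE θ

/-- Parameter shift rule for E(θ) = ⟨ψ|U(θ)† H U(θ)|ψ⟩ with
U(θ) = cos(θ/2)·I − i sin(θ/2)·P, P Hermitian with P² = I, H Hermitian. -/
theorem parameter_shift_rule_expectation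
    {n : ℕ} (P H : Matrix (Fin n) (Fin n) ℂ)
    (hP : P.IsHermitian) (hP2 : P * P = 1) (hH : H.IsHermitian)
    (ψ : Fin n → ℂ) :
    let U : ℝ → Matrix (Fin n) (Fin n) ℂ := fun θ =>
      (Real.cos (θ / 2) : ℂ) • (1 : Matrix (Fin n) (Fin n) ℂ)
        - (Complex.I * (Real.sin (θ / 2) : ℂ)) • P
    let E : ℝ → ℂ := fun θ => star ψ ⬝ᵥ (((U θ)ᴴ * H * U θ).mulVec ψ)
    ∀ θ : ℝ, HasDerivAt E ((1 / 2 : ℂ) * (E (θ + π / 2) - E (θ - π / 2))) θ :=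
  parameter_shift_rule_expectation_general P H ψ
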